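/- (Theorem 5(iii).) If β > 0, then for each fixed p ∈ [0,1) the threshold function W ↦ G(W, p; β) is strictly increasing on (0, 1]: for all 0 < W₁ < W₂ ≤ 1, G(W₁, p; β) < G(W₂, p; β). -/

import Mathlib

/-!
With `x = (1 - p) W` the radicand of `G` completes to a square, so that
`G = √(v² + 2β/(1-p)) - v` with `v = 1/x - 1/2`. For `c > 0` the map `v ↦ √(v² + c) - v`
is strictly decreasing, because `√(v² + c) > v`; and `v` is strictly decreasing in `W`.
-/

/-- The optimal-threshold function `G(W, p; β)` of Corollary 1, with
`R = 1 − (1−p)·W`. -/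
noncomputable def G (W p β : ℝ) : ℝ :=
  let R := 1 - (1 - p) * W;
  -(1 + R) / (2 * (1 - R)) +
    Real.sqrt (R ^ 2 / (1 - R) ^ 2 + (R + 2 * β * W) / (1 - R) + 1 / 4)

lemma strictAnti_sqrt_sq_add_sub {c : ℝ} (hc : 0 < c) :
    StrictAnti fun v : ℝ => √(v ^ 2 + c) - v := by
  intro v₁ v₂ h
  have hlt : v₁ < √(v₁ ^ 2 + c) :=
    calc v₁ ≤ |v₁| := le_abs_self v₁
      _ = √(v₁ ^ 2) := (Real.sqrt_sq_eq_abs v₁).symm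
      _ < √(v₁ ^ 2 + c) := Real.sqrt_lt_sqrt (sq_nonneg v₁) (by linarith)
  have hsq := Real.sq_sqrt (show 0 ≤ v₁ ^ 2 + c by positivity)
  suffices √(v₂ ^ 2 + c) < √(v₁ ^ 2 + c) + (v₂ - v₁) by simp only; linarith
  rw [Real.sqrt_lt' (by linarith [Real.sqrt_nonneg (v₁ ^ 2 + c)])]
  nlinarith

lemma G_eq_sqrt_sq_add_sub {W p : ℝ} (β : ℝ) (hW : W ≠ 0) (hp : p ≠ 1) :
    G W p β = √((1 / ((1 - p) * W) - 1 / 2) ^ 2 + 2 * β / (1 - p)) -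
      (1 / ((1 - p) * W) - 1 / 2) := by
  have hq : 1 - p ≠ 0 := sub_ne_zero.mpr hp.symm
  have hx : (1 - p) * W ≠ 0 := mul_ne_zero hq hW
  have hradicand : (1 - (1 - p) * W) ^ 2 / ((1 - p) * W) ^ 2 +
        (1 - (1 - p) * W + 2 * β * W) / ((1 - p) * W) + 1 / 4 =
      (1 / ((1 - p) * W) - 1 / 2) ^ 2 + 2 * β / (1 - p) := by
    field_simp
    ring
  simp only [G, sub_sub_cancel, hradicand]
  field_simp
  ring

/-- Theorem 5(iii): for `β > 0` and fixed `p ∈ [0,1)`, the threshold function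
`W ↦ G(W, p; β)` is strictly increasing on `(0, 1]`. -/
theorem G_strictMono_in_W (β : ℝ) (hβ : 0 < β) :
    ∀ p : ℝ, 0 ≤ p → p < 1 →
      ∀ W₁ W₂ : ℝ, 0 < W₁ → W₁ < W₂ → W₂ ≤ 1 → G W₁ p β < G W₂ p β := by
  intro p _ hp W₁ W₂ hW₁ hW₁₂ _
  have hq : 0 < 1 - p := sub_pos.mpr hp
  rw [G_eq_sqrt_sq_add_sub β hW₁.ne' hp.ne, G_eq_sqrt_sq_add_sub β (hW₁.trans hW₁₂).ne' hp.ne]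
  refine strictAnti_sqrt_sq_add_sub (by positivity) ?_
  gcongr
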